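/- For the geometric covering intervals I_k = {[i·2^k, (i+1)·2^k - 1] : i ∈ N} (k ≥ 0), any interval [s, s+τ-1] ⊆ [1, T] of natural numbers can be partitioned into two finite sequences of disjoint consecutive intervals I_{-p}, ..., I_0 and I_1, ..., I_q, each belonging to ∪_k I_k, such that |I_{-i}|/|I_{-i+1}| ≤ 1/2 for all i ≥ 1 and |I_i|/|I_{i-1}| ≤ 1/2 for all i ≥ 2. -/

import Mathlib

/-!
Take a dyadic block `[L, L + 2^m)` of maximal length inside `[s, s + τ)`, leftmost among those of
that length. Then the gap `L - s` on its left is less than `2^m`, and the gap `r` on its right is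
less than `2^(m+1)`: otherwise `L` or `L + 2^m` would start an aligned block of length `2^(m+1)`.
Cut the left gap into blocks whose lengths are the binary digits of `L - s`, increasing towards
`L`, and the right gap into the binary digits of `r`, decreasing away from `L + 2^m`. The lengths
then at least double towards the centre on both sides, and every block is separated from the
multiple `L` of `2^m` only by blocks of larger power-of-two lengths, so it starts at a multiple of
its own length.
-/

/-- The geometric covering intervals of Daniely et al. (2015):
`I_k = {[i·2^k, (i+1)·2^k - 1] : i ∈ ℕ}` for `k ≥ 0`. -/
def GCIntervals : Set (Finset ℕ) :=
  {A | ∃ k i : ℕ, A = Finset.Icc (i * 2 ^ k) ((i + 1) * 2 ^ k - 1)}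

open Finset

lemma Ico_mem_GCIntervals {k x : ℕ} (h : 2 ^ k ∣ x) : Ico x (x + 2 ^ k) ∈ GCIntervals := by
  obtain ⟨i, rfl⟩ := h
  refine ⟨k, i, ?_⟩
  have := Nat.two_pow_pos k
  ext y
  simp only [mem_Ico, mem_Icc, add_one_mul, mul_comm i]
  omega

section MonotoneBoundaries

variable {β : Type*} [LinearOrder β] [LocallyFiniteOrder β] {b : ℤ → β}

theorem Monotone.biUnion_Icc_Ico_eq_Ico (hb : Monotone b) {lo hi : ℤ} (h : lo ≤ hi + 1) :
    (Icc lo hi).biUnion (fun i => Ico (b i) (b (i + 1))) = Ico (b lo) (b (hi + 1)) := by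
  induction hi, (show lo - 1 ≤ hi by omega) using Int.leInduction with
  | base => simp
  | succ hi hle ih =>
    rw [← insert_Icc_right_eq_Icc_add_one (by omega), biUnion_insert, ih (by omega), union_comm,
      Ico_union_Ico_eq_Ico (hb (by omega)) (hb (by omega))]

theorem Monotone.disjoint_Ico_of_lt (hb : Monotone b) {i j : ℤ} (hij : i < j) :
    Disjoint (Ico (b i) (b (i + 1))) (Ico (b j) (b (j + 1))) :=
  disjoint_left.2 fun _ hi hj =>
    (mem_Ico.1 hi).2.not_ge ((hb (by omega : i + 1 ≤ j)).trans (mem_Ico.1 hj).1)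

end MonotoneBoundaries

lemma Finset.min'_Ico {α : Type*} [LinearOrder α] [LocallyFiniteOrder α] {x y : α}
    (h : (Ico x y).Nonempty) : (Ico x y).min' h = x :=
  (min'_eq_iff _ _ _).2 ⟨mem_Ico.2 ⟨le_rfl, nonempty_Ico.1 h⟩, fun _ hz => (mem_Ico.1 hz).1⟩

lemma Nat.max'_Ico {x y : ℕ} (h : (Ico x y).Nonempty) : (Ico x y).max' h = y - 1 := by
  have := nonempty_Ico.1 h
  refine (max'_eq_iff _ _ _).2 ⟨mem_Ico.2 ⟨by omega, by omega⟩, fun z hz => ?_⟩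
  have := (mem_Ico.1 hz).2
  omega

def DyadicChain : ℕ → List ℕ → Prop
  | _, [] => True
  | a, k :: ks => 2 ^ k ∣ a ∧ DyadicChain (a + 2 ^ k) ks

theorem dyadicChain_append {a : ℕ} {l₁ l₂ : List ℕ} :
    DyadicChain a (l₁ ++ l₂) ↔
      DyadicChain a l₁ ∧ DyadicChain (a + (l₁.map (2 ^ ·)).sum) l₂ := by
  induction l₁ generalizing a with
  | nil => simp [DyadicChain]
  | cons k ks ih => simp [DyadicChain, ih, and_assoc, add_assoc]

theorem dyadicChain_of_pairwise_ge {k R : ℕ} {F : List ℕ} (hF : F.Pairwise (· ≥ ·))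
    (hk : ∀ f ∈ F, f ≤ k) (hR : 2 ^ k ∣ R) : DyadicChain R F := by
  induction F generalizing k R with
  | nil => trivial
  | cons f F ih =>
    rw [List.pairwise_cons] at hF
    have hfR : 2 ^ f ∣ R := (Nat.pow_dvd_pow 2 (hk f List.mem_cons_self)).trans hR
    exact ⟨hfR, ih hF.2 hF.1 (dvd_add hfR dvd_rfl)⟩

theorem dyadicChain_sub_of_pairwise_le {k L : ℕ} {E : List ℕ} (hE : E.Pairwise (· ≤ ·))
    (hk : ∀ e ∈ E, e ≤ k) (hL : 2 ^ k ∣ L) (hsum : (E.map (2 ^ ·)).sum ≤ L) :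
    DyadicChain (L - (E.map (2 ^ ·)).sum) E := by
  induction E with
  | nil => trivial
  | cons e E ih =>
    rw [List.pairwise_cons] at hE
    simp only [List.map_cons, List.sum_cons] at hsum ⊢
    have hsumE : 2 ^ e ∣ (E.map (2 ^ ·)).sum :=
      List.dvd_sum (by simpa using fun x hx => Nat.pow_dvd_pow 2 (hE.1 x hx))
    refine ⟨Nat.dvd_sub ((Nat.pow_dvd_pow 2 (hk e List.mem_cons_self)).trans hL)
      (dvd_add dvd_rfl hsumE), ?_⟩
    rw [show L - (2 ^ e + (E.map (2 ^ ·)).sum) + 2 ^ e = L - (E.map (2 ^ ·)).sum by omega]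
    exact ih hE.2 (fun x hx => hk x (List.mem_cons_of_mem e hx)) (by omega)

theorem DyadicChain.dvd_add_sum_take {a : ℕ} {es : List ℕ} (h : DyadicChain a es) {t : ℕ}
    (ht : t < es.length) : 2 ^ es.getD t 0 ∣ a + ((es.map (2 ^ ·)).take t).sum := by
  induction es generalizing a t with
  | nil => simp at ht
  | cons k ks ih =>
    cases t with
    | zero => simpa using h.1
    | succ t =>
      simpa [add_assoc] using ih h.2 (by simpa using ht)

theorem exists_tiling_of_dyadicChain {a p q : ℕ} {es : List ℕ} (hlen : es.length = p + q + 1)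
    (hes : DyadicChain a es) :
    ∃ J : ℤ → Finset ℕ,
      (Icc (-(p : ℤ)) q).biUnion J = Ico a (a + (es.map (2 ^ ·)).sum) ∧
      (∀ i ∈ Icc (-(p : ℤ)) q, ∀ j ∈ Icc (-(p : ℤ)) q, i ≠ j → Disjoint (J i) (J j)) ∧
      (∀ i ∈ Icc (-(p : ℤ)) q, J i ∈ GCIntervals ∧ (J i).Nonempty) ∧
      (∀ i ∈ Icc (-(p : ℤ)) (q - 1), ∀ (h : (J i).Nonempty) (h' : (J (i + 1)).Nonempty),
        (J (i + 1)).min' h' = (J i).max' h + 1) ∧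
      (∀ i ∈ Icc (-(p : ℤ)) q, (J i).card = 2 ^ es.getD (i + p).toNat 0) := by
  set b : ℤ → ℕ := fun i => a + ((es.map (2 ^ ·)).take (i + p).toNat).sum with hb
  have hmono : Monotone b := fun i j hij =>
    Nat.add_le_add_left ((List.take_prefix_take_left (by omega)).sublist.sum_le_sum (by simp)) a
  have hsucc : ∀ i ∈ Icc (-(p : ℤ)) q, b (i + 1) = b i + 2 ^ es.getD (i + p).toNat 0 := by
    intro i hi
    rw [mem_Icc] at hi
    have ht : (i + p).toNat < es.length := by omega
    simp only [hb]
    rw [show (i + 1 + p).toNat = (i + p).toNat + 1 by omega,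
      List.sum_take_succ _ _ (by simpa using ht), List.getElem_map, List.getD_eq_getElem _ _ ht,
      add_assoc]
  have hdvd : ∀ i ∈ Icc (-(p : ℤ)) q, 2 ^ es.getD (i + p).toNat 0 ∣ b i := fun i hi =>
    hes.dvd_add_sum_take (by rw [mem_Icc] at hi; omega)
  refine ⟨fun i => Ico (b i) (b (i + 1)), ?_, ?_, fun i hi => ?_, fun i hi h h' => ?_,
    fun i hi => ?_⟩
  · have hhi : b (q + 1) = a + (es.map (2 ^ ·)).sum := by
      simp only [hb]
      rw [List.take_of_length_le (by rw [List.length_map]; omega)]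
    rw [hmono.biUnion_Icc_Ico_eq_Ico (by omega), hhi]
    simp [hb]
  · intro i _ j _ hij
    rcases hij.lt_or_gt with hij | hij
    exacts [hmono.disjoint_Ico_of_lt hij, (hmono.disjoint_Ico_of_lt hij).symm]
  · simp only [hsucc i hi]
    exact ⟨Ico_mem_GCIntervals (hdvd i hi), nonempty_Ico.2 (by simp)⟩
  · simp only [Finset.min'_Ico, Nat.max'_Ico]
    have := nonempty_Ico.1 h
    omega
  · simp [hsucc i hi]

theorem Nat.exists_sum_two_pow_of_lt {n k : ℕ} (hn : n < 2 ^ k) :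
    ∃ E : List ℕ, E.Pairwise (· < ·) ∧ (∀ e ∈ E, e < k) ∧ (E.map (2 ^ ·)).sum = n :=
  ⟨n.bitIndices, Nat.bitIndices_sorted.pairwise,
    fun _ he => (Nat.pow_lt_pow_iff_right (by norm_num)).1
      ((Nat.two_pow_le_of_mem_bitIndices he).trans_lt hn),
    n.sum_map_two_pow_bitIndices⟩

theorem dyadicChain_sub_append_cons {m L : ℕ} {E F : List ℕ} (hE : E.Pairwise (· ≤ ·))
    (hEm : ∀ e ∈ E, e ≤ m) (hF : F.Pairwise (· ≥ ·)) (hFm : ∀ f ∈ F, f ≤ m) (hL : 2 ^ m ∣ L)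
    (hEL : (E.map (2 ^ ·)).sum ≤ L) :
    DyadicChain (L - (E.map (2 ^ ·)).sum) (E ++ m :: F) := by
  rw [dyadicChain_append, Nat.sub_add_cancel hEL]
  exact ⟨dyadicChain_sub_of_pairwise_le hE hEm hL hEL, hL,
    dyadicChain_of_pairwise_ge hF hFm (dvd_add hL dvd_rfl)⟩

theorem two_pow_succ_dvd_or_dvd_add {m L : ℕ} (h : 2 ^ m ∣ L) :
    2 ^ (m + 1) ∣ L ∨ 2 ^ (m + 1) ∣ L + 2 ^ m := by
  obtain ⟨c, rfl⟩ := h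
  rcases Nat.even_or_odd c with ⟨j, rfl⟩ | ⟨j, rfl⟩
  · exact .inl ⟨j, by ring⟩
  · exact .inr ⟨j + 1, by ring⟩

theorem exists_maximal_dyadic_block {a e : ℕ} (h : a < e) :
    ∃ m L, 2 ^ m ∣ L ∧ a ≤ L ∧ L < a + 2 ^ m ∧ L + 2 ^ m ≤ e ∧ e < L + 2 ^ m + 2 ^ (m + 1) := by
  classical
  let P : ℕ → Prop := fun k => ∃ L, 2 ^ k ∣ L ∧ a ≤ L ∧ L + 2 ^ k ≤ e
  have hPm : P (Nat.findGreatest P e) :=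
    Nat.findGreatest_spec (Nat.zero_le e) ⟨a, one_dvd a, le_rfl, h⟩
  set m := Nat.findGreatest P e
  obtain ⟨hdvd, haL, hLe⟩ := Nat.find_spec hPm
  set L := Nat.find hPm
  have hpow := Nat.two_pow_pos m
  refine ⟨m, L, hdvd, haL, ?_, hLe, ?_⟩
  · by_contra! hL
    have := Nat.find_min' hPm (m := L - 2 ^ m) ⟨Nat.dvd_sub hdvd dvd_rfl, by omega, by omega⟩
    omega
  · by_contra! he
    have hm : m + 1 ≤ e := by
      have := (m + 1).lt_two_pow_self
      omega
    refine Nat.findGreatest_is_greatest (Nat.lt_succ_self m) hm ?_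
    rcases two_pow_succ_dvd_or_dvd_add hdvd with h | h
    exacts [⟨L, h, haL, by rw [pow_succ]; omega⟩, ⟨L + 2 ^ m, h, by omega, by rw [pow_succ]; omega⟩]

theorem List.getD_lt_getD_succ_of_lt_length {m t : ℕ} {E F : List ℕ} (hE : E.Pairwise (· < ·))
    (hEm : ∀ e ∈ E, e < m) (ht : t < E.length) :
    (E ++ m :: F).getD t 0 < (E ++ m :: F).getD (t + 1) 0 := by
  have ht' : t + 1 < (E ++ [m]).length := by simpa using ht
  rw [List.append_cons, List.getD_append _ _ _ _ (by omega), List.getD_append _ _ _ _ ht',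
    List.getD_eq_getElem _ _ (by omega), List.getD_eq_getElem _ _ ht']
  refine List.pairwise_iff_getElem.1 ?_ _ _ _ _ (Nat.lt_succ_self t)
  exact List.pairwise_append.2 ⟨hE, by simp, fun e he _ hm => List.mem_singleton.1 hm ▸ hEm e he⟩

theorem List.getD_succ_lt_getD_of_length_lt {m t : ℕ} {E F : List ℕ} (hF : F.Pairwise (· > ·))
    (ht : E.length < t) (ht' : t < E.length + F.length) :
    (E ++ m :: F).getD (t + 1) 0 < (E ++ m :: F).getD t 0 := by
  rw [List.getD_append_right _ _ _ _ (by omega), List.getD_append_right _ _ _ _ (by omega),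
    show t + 1 - E.length = (t - E.length - 1 + 1) + 1 by omega,
    show t - E.length = (t - E.length - 1) + 1 by omega]
  simp only [List.getD_cons_succ]
  rw [List.getD_eq_getElem _ _ (by omega), List.getD_eq_getElem _ _ (by omega)]
  exact List.pairwise_iff_getElem.1 hF _ _ _ _ (Nat.lt_succ_self _)

theorem geometric_covering_lemma_general (s τ : ℕ) (hτ : 1 ≤ τ) :
    ∃ (p q : ℕ) (J : ℤ → Finset ℕ),
      -- the pieces partition [s, s+τ-1]
      (Finset.Icc (-(p : ℤ)) q).biUnion (fun i => J i) = Finset.Icc s (s + τ - 1) ∧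
      (∀ i ∈ Finset.Icc (-(p : ℤ)) (q : ℤ), ∀ j ∈ Finset.Icc (-(p : ℤ)) (q : ℤ),
        i ≠ j → Disjoint (J i) (J j)) ∧
      -- each piece is a nonempty geometric covering interval
      (∀ i ∈ Finset.Icc (-(p : ℤ)) (q : ℤ), J i ∈ GCIntervals ∧ (J i).Nonempty) ∧
      -- the pieces are consecutive
      (∀ i ∈ Finset.Icc (-(p : ℤ)) ((q : ℤ) - 1), ∀ (h : (J i).Nonempty)
        (h' : (J (i + 1)).Nonempty), (J (i + 1)).min' h' = (J i).max' h + 1) ∧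
      -- lengths of the backward sequence halve
      (∀ i : ℤ, 1 ≤ i → -i ≥ -(p : ℤ) → 2 * (J (-i)).card ≤ (J (-i + 1)).card) ∧
      -- lengths of the forward sequence halve
      (∀ i : ℤ, 2 ≤ i → i ≤ (q : ℤ) → 2 * (J i).card ≤ (J (i - 1)).card) := by
  obtain ⟨m, L, hdvd, hsL, hLs, hLe, heL⟩ := exists_maximal_dyadic_block (show s < s + τ by omega)
  obtain ⟨E, hE, hEm, hEsum⟩ := Nat.exists_sum_two_pow_of_lt (show L - s < 2 ^ m by omega)
  obtain ⟨F, hF, hFm, hFsum⟩ :=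
    Nat.exists_sum_two_pow_of_lt (show s + τ - (L + 2 ^ m) < 2 ^ (m + 1) by rw [pow_succ]; omega)
  have hchain : DyadicChain s (E ++ m :: F.reverse) := by
    simpa [hEsum, Nat.sub_sub_self hsL] using dyadicChain_sub_append_cons (hE.imp le_of_lt)
      (fun e he => (hEm e he).le) (List.pairwise_reverse.2 (hF.imp le_of_lt))
      (fun f hf => Nat.lt_succ_iff.1 (hFm f (List.mem_reverse.1 hf))) hdvd (by omega)
  obtain ⟨J, hunion, hdisj, hgc, hcons, hcard⟩ :=
    exists_tiling_of_dyadicChain (p := E.length) (q := F.length) (by simp [add_assoc]) hchain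
  refine ⟨E.length, F.length, J, ?_, hdisj, hgc, hcons, fun i hi hp => ?_, fun i hi hq => ?_⟩
  · have hsum : ((E ++ m :: F.reverse).map (2 ^ ·)).sum = τ := by
      simp only [List.map_append, List.map_cons, List.map_reverse, List.sum_append, List.sum_cons,
        List.sum_reverse, hEsum, hFsum]
      omega
    rw [hunion, hsum]
    ext x
    simp only [mem_Ico, mem_Icc]
    omega
  · rw [hcard (-i) (by rw [mem_Icc]; omega), hcard (-i + 1) (by rw [mem_Icc]; omega),
      show (-i + 1 + E.length).toNat = (-i + E.length).toNat + 1 by omega, ← pow_succ']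
    exact Nat.pow_le_pow_right two_pos (List.getD_lt_getD_succ_of_lt_length hE hEm (by omega))
  · rw [hcard i (by rw [mem_Icc]; omega), hcard (i - 1) (by rw [mem_Icc]; omega),
      show (i + E.length).toNat = (i - 1 + E.length).toNat + 1 by omega, ← pow_succ']
    exact Nat.pow_le_pow_right two_pos (List.getD_succ_lt_getD_of_length_lt
      (List.pairwise_reverse.2 hF) (by omega) (by rw [List.length_reverse]; omega))

/-- Geometric covering lemma: any interval `[s, s+τ-1] ⊆ [1, T]` can be partitioned into
two sequences of disjoint consecutive geometric covering intervals `I_{-p}, …, I_0` and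
`I_1, …, I_q` whose lengths decay by factors of at least `1/2`. -/
theorem geometric_covering_lemma (T s τ : ℕ) (hs : 1 ≤ s) (hτ : 1 ≤ τ)
    (hT : s + τ - 1 ≤ T) :
    ∃ (p q : ℕ) (J : ℤ → Finset ℕ),
      -- the pieces partition [s, s+τ-1]
      (Finset.Icc (-(p : ℤ)) q).biUnion (fun i => J i) = Finset.Icc s (s + τ - 1) ∧
      (∀ i ∈ Finset.Icc (-(p : ℤ)) (q : ℤ), ∀ j ∈ Finset.Icc (-(p : ℤ)) (q : ℤ),
        i ≠ j → Disjoint (J i) (J j)) ∧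
      -- each piece is a nonempty geometric covering interval
      (∀ i ∈ Finset.Icc (-(p : ℤ)) (q : ℤ), J i ∈ GCIntervals ∧ (J i).Nonempty) ∧
      -- the pieces are consecutive
      (∀ i ∈ Finset.Icc (-(p : ℤ)) ((q : ℤ) - 1), ∀ (h : (J i).Nonempty)
        (h' : (J (i + 1)).Nonempty), (J (i + 1)).min' h' = (J i).max' h + 1) ∧
      -- lengths of the backward sequence halve
      (∀ i : ℤ, 1 ≤ i → -i ≥ -(p : ℤ) → 2 * (J (-i)).card ≤ (J (-i + 1)).card) ∧
      -- lengths of the forward sequence halve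
      (∀ i : ℤ, 2 ≤ i → i ≤ (q : ℤ) → 2 * (J i).card ≤ (J (i - 1)).card) :=
  geometric_covering_lemma_general s τ hτ
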